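/- arXiv:2605.05266 — 2 statements merged into one kernel-verified Lean document; each statement's English description precedes it below -/
import Mathlib

section
/- For every node v in N ∪ A, n(v) = |S(v)|, the number of reduced sub-strategies at v. In particular, n(r) = |S|, the number of reduced strategies. -/
open scoped Classical

/-- A finite rooted tree whose internal nodes are partitioned into infosets `N`
and actions `A`: the root is an infoset, every child of an infoset is an action,
every child of an action is an infoset or a leaf, and every infoset has at
least two children.  The tree structure is given by a parent function together
with a depth function witnessing well-foundedness. -/
structure EFTree (V : Type*) [Fintype V] [DecidableEq V] where
  root : V
  parent : V → V
  parent_root : parent root = root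
  depth : V → ℕ
  depth_root : depth root = 0
  depth_parent : ∀ v : V, v ≠ root → depth v = depth (parent v) + 1
  N : Finset V
  A : Finset V
  disj : Disjoint N A
  internal_iff : ∀ v : V, (v ∈ N ∨ v ∈ A) ↔ ∃ u : V, u ≠ root ∧ parent u = v
  root_N : root ∈ N
  infoset_child : ∀ u : V, u ≠ root → parent u ∈ N → u ∈ A
  action_child : ∀ u : V, u ≠ root → parent u ∈ A → u ∉ A
  branching : ∀ v ∈ N, 1 < (Finset.univ.filter fun u => u ≠ root ∧ parent u = v).card

namespace EFTree

variable {V : Type*} [Fintype V] [DecidableEq V] (T : EFTree V)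

/-- The set `C(v)` of children of a node `v`. -/
def children (v : V) : Finset V := Finset.univ.filter fun u => u ≠ T.root ∧ T.parent u = v

/-- The set `L` of leaves: the nodes that are neither infosets nor actions. -/
def leaves : Finset V := Finset.univ \ (T.N ∪ T.A)

/-- `Desc u v` means `u` is a descendant of `v` (every node is a descendant of itself). -/
def Desc (u v : V) : Prop := ∃ k : ℕ, T.parent^[k] u = v

/-- The reachable set `V(σ)` of a (sub-)strategy `σ` started at the node `w`:
the minimal set of nodes containing `w`, containing `σ v` for every infoset `v`
in the set, and containing all children of every action in the set. -/
def reachFrom (w : V) (σ : V → V) : Set V :=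
  ⋂₀ {s : Set V | w ∈ s ∧ (∀ v ∈ T.N, v ∈ s → σ v ∈ s) ∧
      ∀ a ∈ T.A, a ∈ s → ∀ u ∈ T.children a, u ∈ s}

/-- The reachable set `V(σ)` of a strategy `σ`. -/
def reachS (σ : V → V) : Set V := T.reachFrom T.root σ

/-- `σ : V → V` canonically represents a reduced sub-strategy at the node `w`:
at every infoset in its reachable set it selects a child, and everywhere else it
is the identity (so that each reduced sub-strategy, i.e. each restriction of a
sub-strategy at `w` to the infosets it can reach, has exactly one
representative). -/
def IsRedSubStrat (w : V) (σ : V → V) : Prop :=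
  (∀ v ∈ T.N, v ∈ T.reachFrom w σ → σ v ∈ T.children v) ∧
  ∀ v : V, ¬(v ∈ T.N ∧ v ∈ T.reachFrom w σ) → σ v = v

/-- `σ : V → V` canonically represents a reduced strategy, i.e. a member of `S`. -/
def IsRedStrat (σ : V → V) : Prop := T.IsRedSubStrat T.root σ

/-- The set `A(σ) = A ∩ V(σ)` of actions reachable under a reduced (sub-)strategy. -/
noncomputable def Aset (σ : V → V) : Finset V := T.A.filter fun a => a ∈ T.reachS σ

/-- The set `A(σ) = A ∩ V(σ)` for a reduced sub-strategy at `w`. -/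
noncomputable def AsetFrom (w : V) (σ : V → V) : Finset V := T.A.filter fun a => a ∈ T.reachFrom w σ

/-- An environment chooses a child of every action. -/
def IsEnv (μ : V → V) : Prop := ∀ a ∈ T.A, μ a ∈ T.children a

/-- The reachable set `V(μ)` of an environment `μ`: the minimal set of nodes
containing the root, all children of every infoset in the set, and `μ a` for
every action `a` in the set. -/
def reachE (μ : V → V) : Set V :=
  ⋂₀ {s : Set V | T.root ∈ s ∧ (∀ v ∈ T.N, v ∈ s → ∀ u ∈ T.children v, u ∈ s) ∧
      ∀ a ∈ T.A, a ∈ s → μ a ∈ s}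

/-- `Z(μ)`: the set of actions reachable under `μ` whose chosen child is a leaf. -/
noncomputable def Zset (μ : V → V) : Finset V := T.A.filter fun a => a ∈ T.reachE μ ∧ μ a ∈ T.leaves

/-- A policy assigns to each action a probability in `[0,1]`, summing to one
over the children of each infoset. -/
def IsPolicy (π : V → ℝ) : Prop :=
  (∀ a ∈ T.A, 0 ≤ π a ∧ π a ≤ 1) ∧ ∀ v ∈ T.N, ∑ a ∈ T.children v, π a = 1

/-- The root-to-leaf path traversed when the reduced strategy `σ` is played
against the environment `μ`: the minimal set of nodes containing the root,
containing `σ v` for every infoset `v` in the set, and `μ a` for every action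
`a` in the set. -/
def playPath (σ μ : V → V) : Set V :=
  ⋂₀ {s : Set V | T.root ∈ s ∧ (∀ v ∈ T.N, v ∈ s → σ v ∈ s) ∧
      ∀ a ∈ T.A, a ∈ s → μ a ∈ s}

/-- `z` is the last action node on the play path of `(σ, μ)`: it is an action on
the path of which every other action on the path is an ancestor. -/
def IsLastAction (σ μ : V → V) (z : V) : Prop :=
  z ∈ T.A ∧ z ∈ T.playPath σ μ ∧ ∀ a ∈ T.A, a ∈ T.playPath σ μ → T.Desc z a

end EFTree

section Helpers

open EFTree

variable {V : Type*} [Fintype V] [DecidableEq V] (T : EFTree V)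

lemma mem_children' {u v : V} : u ∈ T.children v ↔ u ≠ T.root ∧ T.parent u = v := by
  simp [EFTree.children]

lemma notMem_A_of_mem_N {v : V} (h : v ∈ T.N) : v ∉ T.A :=
  Finset.disjoint_left.mp T.disj h

lemma child_of_infoset_mem_A {w u : V} (hw : w ∈ T.N) (hu : u ∈ T.children w) : u ∈ T.A := by
  rw [mem_children'] at hu
  exact T.infoset_child u hu.1 (hu.2 ▸ hw)

lemma depth_child {u v : V} (h : u ∈ T.children v) : T.depth u = T.depth v + 1 := by
  rw [mem_children'] at h
  rw [T.depth_parent u h.1, h.2]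

-- reachFrom basics
lemma self_mem_reachFrom (w : V) (σ : V → V) : w ∈ T.reachFrom w σ :=
  fun _ hs => hs.1

lemma reachFrom_N {w v : V} {σ : V → V} (hv : v ∈ T.N) (hvm : v ∈ T.reachFrom w σ) :
    σ v ∈ T.reachFrom w σ :=
  fun s hs => hs.2.1 v hv (hvm s hs)

lemma reachFrom_A {w a u : V} {σ : V → V} (ha : a ∈ T.A) (ham : a ∈ T.reachFrom w σ)
    (hu : u ∈ T.children a) : u ∈ T.reachFrom w σ :=
  fun s hs => hs.2.2 a ha (ham s hs) u hu

lemma reachFrom_subset {w : V} {σ : V → V} {s : Set V}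
    (h1 : w ∈ s) (h2 : ∀ v ∈ T.N, v ∈ s → σ v ∈ s)
    (h3 : ∀ a ∈ T.A, a ∈ s → ∀ u ∈ T.children a, u ∈ s) :
    T.reachFrom w σ ⊆ s :=
  fun _ hu => hu s ⟨h1, h2, h3⟩

lemma reachFrom_induction {w : V} {σ : V → V} {P : V → Prop}
    (h1 : P w) (h2 : ∀ v ∈ T.N, v ∈ T.reachFrom w σ → P v → P (σ v))
    (h3 : ∀ a ∈ T.A, a ∈ T.reachFrom w σ → P a → ∀ u ∈ T.children a, P u) :
    ∀ v ∈ T.reachFrom w σ, P v := by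
  intro v hv
  have : v ∈ {x | x ∈ T.reachFrom w σ ∧ P x} := by
    refine hv _ ⟨⟨self_mem_reachFrom T w σ, h1⟩, ?_, ?_⟩
    · exact fun u hu ⟨hm, hp⟩ => ⟨reachFrom_N T hu hm, h2 u hu hm hp⟩
    · exact fun a ha ⟨hm, hp⟩ u hu => ⟨reachFrom_A T ha hm hu, h3 a ha hm hp u hu⟩
  exact this.2

lemma reachFrom_trans {w x : V} {σ : V → V} (h : x ∈ T.reachFrom w σ) :
    T.reachFrom x σ ⊆ T.reachFrom w σ :=
  reachFrom_subset T h (fun v hv hm => reachFrom_N T hv hm) (fun a ha hm u hu => reachFrom_A T ha hm hu)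

lemma reachFrom_congr {w : V} {σ τ : V → V}
    (h : ∀ v ∈ T.N, v ∈ T.reachFrom w τ → σ v = τ v) :
    T.reachFrom w σ = T.reachFrom w τ := by
  have h1 : T.reachFrom w σ ⊆ T.reachFrom w τ := by
    refine reachFrom_subset T (self_mem_reachFrom T w τ) (fun v hv hvm => ?_)
      (fun a ha hm u hu => reachFrom_A T ha hm hu)
    rw [h v hv hvm]; exact reachFrom_N T hv hvm
  refine subset_antisymm h1 ?_
  refine reachFrom_subset T (self_mem_reachFrom T w σ) (fun v hv hvm => ?_)
    (fun a ha hm u hu => reachFrom_A T ha hm hu)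
  rw [← h v hv (h1 hvm)]; exact reachFrom_N T hv hvm

lemma le_depth_of_mem_reachFrom {w : V} {σ : V → V}
    (hσ : ∀ v ∈ T.N, v ∈ T.reachFrom w σ → σ v ∈ T.children v) :
    ∀ u ∈ T.reachFrom w σ, T.depth w ≤ T.depth u := by
  refine reachFrom_induction T le_rfl (fun v hv hvm hd => ?_) (fun a _ _ hd u hu => ?_)
  · rw [depth_child T (hσ v hv hvm)]; omega
  · rw [depth_child T hu]; omega

lemma desc_of_mem_reachFrom {w : V} {σ : V → V}
    (hσ : ∀ v ∈ T.N, v ∈ T.reachFrom w σ → σ v ∈ T.children v) :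
    ∀ u ∈ T.reachFrom w σ, T.Desc u w := by
  refine reachFrom_induction T ⟨0, rfl⟩ (fun v hv hvm ⟨k, hk⟩ => ?_) (fun a _ _ ⟨k, hk⟩ u hu => ?_)
  · exact ⟨k + 1, by
      rw [Function.iterate_succ_apply, ((mem_children' T).mp (hσ v hv hvm)).2, hk]⟩
  · exact ⟨k + 1, by
      rw [Function.iterate_succ_apply, ((mem_children' T).mp hu).2, hk]⟩

lemma depth_of_iterate {v : V} (hv : v ≠ T.root) :
    ∀ k, ∀ u : V, T.parent^[k] u = v → T.depth u = T.depth v + k := by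
  intro k
  induction k with
  | zero =>
    intro u h
    simp only [Function.iterate_zero, id_eq] at h
    subst h; simp
  | succ k ih =>
    intro u h
    have hu : u ≠ T.root := by
      rintro rfl
      rw [Function.iterate_fixed T.parent_root (k + 1)] at h
      exact hv h.symm
    rw [Function.iterate_succ_apply] at h
    have := ih (T.parent u) h
    rw [T.depth_parent u hu, this]
    omega

lemma sibling_eq_of_desc {a v v' u : V} (hv : v ∈ T.children a) (hv' : v' ∈ T.children a)
    (h : T.Desc u v) (h' : T.Desc u v') : v = v' := by
  obtain ⟨k, hk⟩ := h
  obtain ⟨k', hk'⟩ := h'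
  have hvr := ((mem_children' T).mp hv).1
  have hvr' := ((mem_children' T).mp hv').1
  have e1 := depth_of_iterate T hvr k u hk
  have e2 := depth_of_iterate T hvr' k' u hk'
  have hd : T.depth v = T.depth v' := by rw [depth_child T hv, depth_child T hv']
  have : k = k' := by omega
  rw [← hk, ← hk', this]

lemma notMem_reachFrom_child {w a : V} {σ : V → V} (ha : a ∈ T.children w)
    (hσ : ∀ v ∈ T.N, v ∈ T.reachFrom a σ → σ v ∈ T.children v) :
    w ∉ T.reachFrom a σ := by
  intro hm
  have := le_depth_of_mem_reachFrom T hσ w hm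
  have := depth_child T ha
  omega

lemma reachFrom_infoset_eq {w : V} (hw : w ∈ T.N) (σ : V → V) :
    T.reachFrom w σ = insert w (T.reachFrom (σ w) σ) := by
  apply subset_antisymm
  · refine reachFrom_subset T (Set.mem_insert _ _) (fun v hv hvm => ?_) (fun a ha ham u hu => ?_)
    · rcases hvm with rfl | hvm
      · exact Set.mem_insert_iff.mpr (Or.inr (self_mem_reachFrom T _ σ))
      · exact Set.mem_insert_iff.mpr (Or.inr (reachFrom_N T hv hvm))
    · rcases ham with rfl | ham
      · exact absurd ha (notMem_A_of_mem_N T hw)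
      · exact Set.mem_insert_iff.mpr (Or.inr (reachFrom_A T ha ham hu))
  · intro u hu
    rcases hu with rfl | hu
    · exact self_mem_reachFrom T u σ
    · exact reachFrom_trans T (reachFrom_N T hw (self_mem_reachFrom T w σ)) hu

lemma reachFrom_action_eq {a : V} (ha : a ∈ T.A) (σ : V → V) :
    T.reachFrom a σ =
      insert a ((T.children a : Set V) ∪
        ⋃ v ∈ (T.children a).filter (· ∈ T.N), T.reachFrom v σ) := by
  apply subset_antisymm
  · refine reachFrom_subset T (Set.mem_insert _ _) (fun v hv hvm => ?_) (fun b hb hbm u hu => ?_)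
    · rcases hvm with rfl | hvm
      · exact absurd ha (notMem_A_of_mem_N T hv)
      · rcases hvm with hvm | hvm
        · refine Set.mem_insert_iff.mpr (Or.inr (Or.inr ?_))
          refine Set.mem_biUnion (Finset.mem_filter.mpr ⟨hvm, hv⟩) (reachFrom_N T hv (self_mem_reachFrom T v σ))
        · obtain ⟨s, hs, hvs⟩ := Set.mem_iUnion₂.mp hvm
          exact Set.mem_insert_iff.mpr (Or.inr (Or.inr
            (Set.mem_biUnion hs (reachFrom_N T hv hvs))))
    · rcases hbm with rfl | hbm
      · exact Set.mem_insert_iff.mpr (Or.inr (Or.inl hu))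
      · rcases hbm with hbm | hbm
        · exfalso
          rw [Finset.mem_coe, mem_children'] at hbm
          exact T.action_child b hbm.1 (hbm.2 ▸ ha) hb
        · obtain ⟨s, hs, hbs⟩ := Set.mem_iUnion₂.mp hbm
          exact Set.mem_insert_iff.mpr (Or.inr (Or.inr
            (Set.mem_biUnion hs (reachFrom_A T hb hbs hu))))
  · intro u hu
    rcases hu with rfl | hu
    · exact self_mem_reachFrom T u σ
    · rcases hu with hu | hu
      · exact reachFrom_A T ha (self_mem_reachFrom T a σ) hu
      · obtain ⟨v, hv, hvs⟩ := Set.mem_iUnion₂.mp hu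
        have hv' : v ∈ T.children a := (Finset.mem_filter.mp hv).1
        exact reachFrom_trans T (reachFrom_A T ha (self_mem_reachFrom T a σ) hv') hvs

end Helpers
section Part2

open EFTree

variable {V : Type*} [Fintype V] [DecidableEq V] (T : EFTree V)

lemma depth_lt_card (v : V) : T.depth v < Fintype.card V := by
  have key : ∀ k ≤ T.depth v, T.depth (T.parent^[k] v) + k = T.depth v := by
    intro k
    induction k with
    | zero => simp
    | succ k ih =>
      intro hk
      have h1 := ih (Nat.le_of_succ_le hk)
      have hne : T.parent^[k] v ≠ T.root := by
        intro h
        rw [h, T.depth_root] at h1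
        omega
      rw [Function.iterate_succ_apply']
      have h2 := T.depth_parent _ hne
      omega
  have hinj : Function.Injective (fun k : Fin (T.depth v + 1) => T.parent^[k.1] v) := by
    intro i j hij
    have hi := key i.1 (Nat.lt_succ_iff.mp i.2)
    have hj := key j.1 (Nat.lt_succ_iff.mp j.2)
    simp only at hij
    rw [hij] at hi
    exact Fin.ext (by omega)
  have := Fintype.card_le_of_injective _ hinj
  simp only [Fintype.card_fin] at this
  omega

lemma natCard_sigma {ι : Type*} [Fintype ι] (β : ι → Type*) [∀ i, Finite (β i)] :
    Nat.card (Σ i, β i) = ∑ i, Nat.card (β i) := by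
  letI : ∀ i, Fintype (β i) := fun i => Fintype.ofFinite _
  rw [Nat.card_eq_fintype_card, Fintype.card_sigma]
  exact Finset.sum_congr rfl fun i _ => (Nat.card_eq_fintype_card).symm

/-- The fiber of reduced sub-strategies at an infoset `w` choosing the child `a`
is equinumerous with reduced sub-strategies at `a`. -/
lemma card_fiber {w a : V} (hw : w ∈ T.N) (ha : a ∈ T.children w) :
    Nat.card {σ : V → V // T.IsRedSubStrat w σ ∧ σ w = a}
      = Nat.card {τ : V → V // T.IsRedSubStrat a τ} := by
  have key1 : ∀ σ : V → V, T.IsRedSubStrat w σ → σ w = a →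
      T.IsRedSubStrat a (Function.update σ w w) := by
    intro σ hσ hσw
    have hsub : T.reachFrom a σ ⊆ T.reachFrom w σ :=
      reachFrom_trans T (hσw ▸ reachFrom_N T hw (self_mem_reachFrom T w σ))
    have hch : ∀ v ∈ T.N, v ∈ T.reachFrom a σ → σ v ∈ T.children v :=
      fun v hv hm => hσ.1 v hv (hsub hm)
    have hwnot : w ∉ T.reachFrom a σ := notMem_reachFrom_child T ha hch
    have hreq : T.reachFrom a (Function.update σ w w) = T.reachFrom a σ :=
      reachFrom_congr T fun v _ hm =>
        Function.update_of_ne (show v ≠ w from fun h => hwnot (h ▸ hm)) w σ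
    constructor
    · intro v hv hm
      rw [hreq] at hm
      have hvw : v ≠ w := fun h => hwnot (h ▸ hm)
      rw [Function.update_of_ne hvw]
      exact hch v hv hm
    · intro v hnv
      rw [hreq] at hnv
      by_cases hvw : v = w
      · rw [hvw]
        exact Function.update_self w w σ
      · rw [Function.update_of_ne hvw]
        apply hσ.2
        rintro ⟨hvN, hvm⟩
        apply hnv
        refine ⟨hvN, ?_⟩
        rw [reachFrom_infoset_eq T hw σ] at hvm
        rcases hvm with rfl | hvm
        · exact absurd rfl hvw
        · rw [hσw] at hvm
          exact hvm
  have key2 : ∀ τ : V → V, T.IsRedSubStrat a τ →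
      (T.IsRedSubStrat w (Function.update τ w a) ∧ Function.update τ w a w = a) := by
    intro τ hτ
    have hwnot : w ∉ T.reachFrom a τ := notMem_reachFrom_child T ha hτ.1
    have hreq : T.reachFrom a (Function.update τ w a) = T.reachFrom a τ :=
      reachFrom_congr T fun v _ hm =>
        Function.update_of_ne (show v ≠ w from fun h => hwnot (h ▸ hm)) a τ
    have hτ'w : Function.update τ w a w = a := Function.update_self w a τ
    have hrw : T.reachFrom w (Function.update τ w a) = insert w (T.reachFrom a τ) := by
      rw [reachFrom_infoset_eq T hw, hτ'w, hreq]
    refine ⟨⟨?_, ?_⟩, hτ'w⟩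
    · intro v hv hm
      rw [hrw] at hm
      rcases hm with rfl | hm
      · rw [hτ'w]; exact ha
      · have hvw : v ≠ w := fun h => hwnot (h ▸ hm)
        rw [Function.update_of_ne hvw]
        exact hτ.1 v hv hm
    · intro v hnv
      rw [hrw] at hnv
      by_cases hvw : v = w
      · exfalso
        apply hnv
        rw [hvw]
        exact ⟨hw, Set.mem_insert w _⟩
      · rw [Function.update_of_ne hvw]
        apply hτ.2
        rintro ⟨hvN, hvm⟩
        exact hnv ⟨hvN, Set.mem_insert_iff.mpr (Or.inr hvm)⟩
  apply Nat.card_congr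
  refine ⟨fun σ => ⟨Function.update σ.1 w w, key1 σ.1 σ.2.1 σ.2.2⟩,
    fun τ => ⟨Function.update τ.1 w a, (key2 τ.1 τ.2).1, (key2 τ.1 τ.2).2⟩, ?_, ?_⟩
  · rintro ⟨σ, hσ, hσw⟩
    apply Subtype.ext
    simp only
    rw [Function.update_idem, ← hσw, Function.update_eq_self]
  · rintro ⟨τ, hτ⟩
    apply Subtype.ext
    simp only
    have hwnot : w ∉ T.reachFrom a τ := notMem_reachFrom_child T ha hτ.1
    have hτw : τ w = w := hτ.2 w fun h => hwnot h.2
    rw [Function.update_idem]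
    have h2 := Function.update_eq_self w τ
    rwa [hτw] at h2

lemma card_infoset {w : V} (hw : w ∈ T.N) :
    Nat.card {σ : V → V // T.IsRedSubStrat w σ}
      = ∑ a ∈ T.children w, Nat.card {τ : V → V // T.IsRedSubStrat a τ} := by
  classical
  set f : {σ : V → V // T.IsRedSubStrat w σ} → ↥(T.children w) :=
    fun σ => ⟨σ.1 w, σ.2.1 w hw (self_mem_reachFrom T w σ.1)⟩ with hf
  calc Nat.card {σ : V → V // T.IsRedSubStrat w σ}
      = Nat.card ((a : ↥(T.children w)) × {σ : {σ : V → V // T.IsRedSubStrat w σ} // f σ = a}) :=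
        (Nat.card_congr (Equiv.sigmaFiberEquiv f)).symm
    _ = ∑ a : ↥(T.children w), Nat.card {σ : {σ : V → V // T.IsRedSubStrat w σ} // f σ = a} :=
        natCard_sigma _
    _ = ∑ a : ↥(T.children w), Nat.card {τ : V → V // T.IsRedSubStrat a.1 τ} := by
        refine Finset.sum_congr rfl fun a _ => ?_
        rw [← card_fiber T hw a.2]
        apply Nat.card_congr
        refine (Equiv.subtypeEquivRight fun σ => ?_).trans
          (Equiv.subtypeSubtypeEquivSubtypeInter _ _)
        rw [hf]
        constructor
        · intro h
          exact congrArg Subtype.val h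
        · intro h
          exact Subtype.ext h
    _ = ∑ a ∈ T.children w, Nat.card {τ : V → V // T.IsRedSubStrat a τ} :=
        Finset.sum_coe_sort (T.children w)
          (fun a => Nat.card {τ : V → V // T.IsRedSubStrat a τ})

end Part2
section Part3

open EFTree

variable {V : Type*} [Fintype V] [DecidableEq V] (T : EFTree V)

/-- Restriction of a reduced sub-strategy at an action to one of its infoset children. -/
noncomputable def Fc (σ : V → V) (v : V) : V → V :=
  fun u => if u ∈ T.N ∧ u ∈ T.reachFrom v σ then σ u else u

lemma Fc_reach' (σ : V → V) (v : V) : T.reachFrom v (Fc T σ v) = T.reachFrom v σ :=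
  reachFrom_congr T fun u hu hm => if_pos ⟨hu, hm⟩

lemma Fc_red {a v : V} (ha : a ∈ T.A) (hv : v ∈ T.children a)
    {σ : V → V} (hσ : T.IsRedSubStrat a σ) : T.IsRedSubStrat v (Fc T σ v) := by
  have hsub : T.reachFrom v σ ⊆ T.reachFrom a σ :=
    reachFrom_trans T (reachFrom_A T ha (self_mem_reachFrom T a σ) hv)
  constructor
  · intro u hu hm
    rw [Fc_reach'] at hm
    show (if u ∈ T.N ∧ u ∈ T.reachFrom v σ then σ u else u) ∈ T.children u
    rw [if_pos ⟨hu, hm⟩]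
    exact hσ.1 u hu (hsub hm)
  · intro u hnu
    rw [Fc_reach'] at hnu
    show (if u ∈ T.N ∧ u ∈ T.reachFrom v σ then σ u else u) = u
    rw [if_neg hnu]

/-- Combination of a family of reduced sub-strategies at the infoset children of an action. -/
noncomputable def Gc (I : Finset V) (g : V → V → V) : V → V :=
  fun u => if h : ∃ v ∈ I, u ∈ T.N ∧ u ∈ T.reachFrom v (g v) then g h.choose u else u

variable {a : V} {I : Finset V} {g : V → V → V}

lemma Gc_unique (haI : ∀ v ∈ I, v ∈ T.children a)
    (hg : ∀ v ∈ I, ∀ u ∈ T.N, u ∈ T.reachFrom v (g v) → g v u ∈ T.children u)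
    {v v' u : V} (hv : v ∈ I) (hv' : v' ∈ I)
    (hm : u ∈ T.reachFrom v (g v)) (hm' : u ∈ T.reachFrom v' (g v')) : v = v' :=
  sibling_eq_of_desc T (haI v hv) (haI v' hv')
    (desc_of_mem_reachFrom T (hg v hv) u hm)
    (desc_of_mem_reachFrom T (hg v' hv') u hm')

lemma Gc_agree (haI : ∀ v ∈ I, v ∈ T.children a)
    (hg : ∀ v ∈ I, ∀ u ∈ T.N, u ∈ T.reachFrom v (g v) → g v u ∈ T.children u)
    {v u : V} (hv : v ∈ I) (hu : u ∈ T.N) (hm : u ∈ T.reachFrom v (g v)) :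
    Gc T I g u = g v u := by
  have h : ∃ v' ∈ I, u ∈ T.N ∧ u ∈ T.reachFrom v' (g v') := ⟨v, hv, hu, hm⟩
  show (if h' : ∃ v' ∈ I, u ∈ T.N ∧ u ∈ T.reachFrom v' (g v') then g h'.choose u else u) = g v u
  rw [dif_pos h]
  obtain ⟨hc1, _, hc3⟩ := h.choose_spec
  rw [Gc_unique T haI hg hc1 hv hc3 hm]

lemma Gc_child (haI : ∀ v ∈ I, v ∈ T.children a)
    (hg : ∀ v ∈ I, ∀ u ∈ T.N, u ∈ T.reachFrom v (g v) → g v u ∈ T.children u)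
    {u : V} (hu : u ∈ T.N) (hex : ∃ v ∈ I, u ∈ T.reachFrom v (g v)) :
    Gc T I g u ∈ T.children u := by
  obtain ⟨v, hv, hm⟩ := hex
  rw [Gc_agree T haI hg hv hu hm]
  exact hg v hv u hu hm

lemma Gc_off {u : V} (h : ¬ ∃ v ∈ I, u ∈ T.N ∧ u ∈ T.reachFrom v (g v)) :
    Gc T I g u = u := by
  show (if h' : ∃ v' ∈ I, u ∈ T.N ∧ u ∈ T.reachFrom v' (g v') then g h'.choose u else u) = u
  rw [dif_neg h]

lemma Gc_reach (haI : ∀ v ∈ I, v ∈ T.children a)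
    (hg : ∀ v ∈ I, ∀ u ∈ T.N, u ∈ T.reachFrom v (g v) → g v u ∈ T.children u)
    {v : V} (hv : v ∈ I) :
    T.reachFrom v (Gc T I g) = T.reachFrom v (g v) :=
  reachFrom_congr T fun u hu hm => Gc_agree T haI hg hv hu hm

lemma Gc_red (ha : a ∈ T.A) (hIdef : I = (T.children a).filter (· ∈ T.N))
    (hg : ∀ v ∈ I, ∀ u ∈ T.N, u ∈ T.reachFrom v (g v) → g v u ∈ T.children u) :
    T.IsRedSubStrat a (Gc T I g) := by
  have haI : ∀ v ∈ I, v ∈ T.children a := fun v hv =>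
    (Finset.mem_filter.mp (hIdef ▸ hv)).1
  constructor
  · intro u hu hm
    rw [reachFrom_action_eq T ha] at hm
    rcases hm with rfl | hm
    · exact absurd ha (notMem_A_of_mem_N T hu)
    · rcases hm with hm | hm
      · have huI : u ∈ I := hIdef ▸ Finset.mem_filter.mpr ⟨Finset.mem_coe.mp hm, hu⟩
        exact Gc_child T haI hg hu ⟨u, huI, self_mem_reachFrom T u _⟩
      · obtain ⟨v, hvI, hm⟩ := Set.mem_iUnion₂.mp hm
        have hvI' : v ∈ I := hIdef ▸ hvI
        rw [Gc_reach T haI hg hvI'] at hm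
        exact Gc_child T haI hg hu ⟨v, hvI', hm⟩
  · intro u hnu
    apply Gc_off T
    rintro ⟨v, hvI, huN, hm⟩
    apply hnu
    refine ⟨huN, ?_⟩
    have h1 : v ∈ T.reachFrom a (Gc T I g) :=
      reachFrom_A T ha (self_mem_reachFrom T a _) (haI v hvI)
    have h2 : u ∈ T.reachFrom v (Gc T I g) := by
      rw [Gc_reach T haI hg hvI]; exact hm
    exact reachFrom_trans T h1 h2

lemma card_action {a : V} (ha : a ∈ T.A) :
    Nat.card {σ : V → V // T.IsRedSubStrat a σ}
      = ∏ v ∈ (T.children a).filter (· ∈ T.N),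
          Nat.card {τ : V → V // T.IsRedSubStrat v τ} := by
  classical
  set I : Finset V := (T.children a).filter (· ∈ T.N) with hIdef
  have haI : ∀ v ∈ I, v ∈ T.children a := fun v hv => (Finset.mem_filter.mp hv).1
  have hIN : ∀ v ∈ I, v ∈ T.N := fun v hv => (Finset.mem_filter.mp hv).2
  set gOf : (∀ v : ↥I, {τ : V → V // T.IsRedSubStrat v.1 τ}) → V → V → V :=
    fun f v => if h : v ∈ I then (f ⟨v, h⟩).1 else id with hgOf
  have hgOfI : ∀ f, ∀ v : V, ∀ hv : v ∈ I, gOf f v = (f ⟨v, hv⟩).1 := by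
    intro f v hv
    simp only [hgOf, dif_pos hv]
  have hg : ∀ f, ∀ v ∈ I, ∀ u ∈ T.N,
      u ∈ T.reachFrom v (gOf f v) → gOf f v u ∈ T.children u := by
    intro f v hv u hu hm
    rw [hgOfI f v hv] at hm ⊢
    exact (f ⟨v, hv⟩).2.1 u hu hm
  have e : {σ : V → V // T.IsRedSubStrat a σ} ≃
      (∀ v : ↥I, {τ : V → V // T.IsRedSubStrat v.1 τ}) := by
    refine ⟨fun σ v => ⟨Fc T σ.1 v.1, Fc_red T ha (haI v.1 v.2) σ.2⟩,
      fun f => ⟨Gc T I (gOf f), Gc_red T ha rfl (hg f)⟩, ?_, ?_⟩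
    · rintro ⟨σ, hσ⟩
      apply Subtype.ext
      simp only
      funext u
      set f := fun v : ↥I => (⟨Fc T σ v.1, Fc_red T ha (haI v.1 v.2) hσ⟩ :
        {τ : V → V // T.IsRedSubStrat v.1 τ}) with hf
      have hreq : ∀ v : V, ∀ hv : v ∈ I, T.reachFrom v (gOf f v) = T.reachFrom v σ := by
        intro v hv
        rw [hgOfI f v hv]
        exact Fc_reach' T σ v
      by_cases h : ∃ v ∈ I, u ∈ T.N ∧ u ∈ T.reachFrom v (gOf f v)
      · obtain ⟨v, hvI, huN, hm⟩ := h
        rw [Gc_agree T haI (hg f) hvI huN hm, hgOfI f v hvI]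
        have hm' : u ∈ T.reachFrom v σ := by rw [← hreq v hvI]; exact hm
        show (if u ∈ T.N ∧ u ∈ T.reachFrom v σ then σ u else u) = σ u
        rw [if_pos ⟨huN, hm'⟩]
      · rw [Gc_off T h]
        refine (hσ.2 u ?_).symm
        rintro ⟨huN, hm⟩
        apply h
        rw [reachFrom_action_eq T ha] at hm
        rcases hm with rfl | hm
        · exact absurd ha (notMem_A_of_mem_N T huN)
        · rcases hm with hm | hm
          · have huI : u ∈ I := Finset.mem_filter.mpr ⟨Finset.mem_coe.mp hm, huN⟩
            refine ⟨u, huI, huN, ?_⟩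
            rw [hreq u huI]
            exact self_mem_reachFrom T u σ
          · obtain ⟨v, hvI, hm⟩ := Set.mem_iUnion₂.mp hm
            refine ⟨v, hvI, huN, ?_⟩
            rw [hreq v hvI]
            exact hm
    · intro f
      funext v
      apply Subtype.ext
      simp only
      funext u
      have hreq : T.reachFrom v.1 (Gc T I (gOf f)) = T.reachFrom v.1 (f v).1 := by
        rw [Gc_reach T haI (hg f) v.2, hgOfI f v.1 v.2]
      show (if u ∈ T.N ∧ u ∈ T.reachFrom v.1 (Gc T I (gOf f)) then Gc T I (gOf f) u else u)
        = (f v).1 u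
      by_cases h : u ∈ T.N ∧ u ∈ T.reachFrom v.1 (Gc T I (gOf f))
      · rw [if_pos h]
        obtain ⟨huN, hm⟩ := h
        rw [hreq] at hm
        have hm' : u ∈ T.reachFrom v.1 (gOf f v.1) := by rw [hgOfI f v.1 v.2]; exact hm
        rw [Gc_agree T haI (hg f) v.2 huN hm', hgOfI f v.1 v.2]
      · rw [if_neg h]
        refine ((f v).2.2 u ?_).symm
        rintro ⟨huN, hm⟩
        exact h ⟨huN, by rw [hreq]; exact hm⟩
  calc Nat.card {σ : V → V // T.IsRedSubStrat a σ}
      = Nat.card (∀ v : ↥I, {τ : V → V // T.IsRedSubStrat v.1 τ}) := Nat.card_congr e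
    _ = ∏ v : ↥I, Nat.card {τ : V → V // T.IsRedSubStrat v.1 τ} := Nat.card_pi
    _ = ∏ v ∈ I, Nat.card {τ : V → V // T.IsRedSubStrat v τ} :=
        Finset.prod_coe_sort I (fun v => Nat.card {τ : V → V // T.IsRedSubStrat v τ})

end Part3
theorem stmt1 {V : Type*} [Fintype V] [DecidableEq V] (T : EFTree V)
    (n : V → ℕ)
    (hnA : ∀ a ∈ T.A, n a = ∏ v ∈ (T.children a).filter (· ∈ T.N), n v)
    (hnN : ∀ v ∈ T.N, n v = ∑ a ∈ T.children v, n a) :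
    (∀ w ∈ T.N ∪ T.A, n w = Nat.card {σ : V → V // T.IsRedSubStrat w σ}) ∧
    n T.root = Nat.card {σ : V → V // T.IsRedStrat σ} := by
  have main : ∀ k : ℕ, ∀ w : V, Fintype.card V - T.depth w ≤ k → w ∈ T.N ∪ T.A →
      n w = Nat.card {σ : V → V // T.IsRedSubStrat w σ} := by
    intro k
    induction k with
    | zero =>
      intro w hk _
      have := depth_lt_card T w
      omega
    | succ k ih =>
      intro w hk hw
      have hstep : ∀ u ∈ T.children w, Fintype.card V - T.depth u ≤ k := by
        intro u hu
        have := depth_child T hu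
        omega
      rcases Finset.mem_union.mp hw with hwN | hwA
      · rw [hnN w hwN, card_infoset T hwN]
        refine Finset.sum_congr rfl fun u hu => ?_
        exact ih u (hstep u hu)
          (Finset.mem_union.mpr (Or.inr (child_of_infoset_mem_A T hwN hu)))
      · rw [hnA w hwA, card_action T hwA]
        refine Finset.prod_congr rfl fun u hu => ?_
        obtain ⟨hu1, hu2⟩ := Finset.mem_filter.mp hu
        exact ih u (hstep u hu1) (Finset.mem_union.mpr (Or.inl hu2))
  have h1 : ∀ w ∈ T.N ∪ T.A, n w = Nat.card {σ : V → V // T.IsRedSubStrat w σ} :=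
    fun w hw => main (Fintype.card V - T.depth w) w le_rfl hw
  exact ⟨h1, h1 T.root (Finset.mem_union.mpr (Or.inl T.root_N))⟩
end

section
/- For every reduced strategy σ ∈ S, the sum over all actions a ∈ A(σ) of 1/β(a) equals 1. -/
open scoped Classical

/-!
For an infoset `v` reachable under `σ`, let `D(v)` be the set of actions reachable under `σ`
from `v`. With `a = σ v`, `D(v)` is `a` together with the disjoint union of the `D(u)` over
the infoset children `u` of `a`, and `1 / β u = m u / β a`. Induction on `|D(v)|` therefore gives
`∑_{D(v)} 1 / β = (1 + ∑ m u) / β a = m a / β a = 1 / β v`; at the root `β = 1`.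
-/

namespace EFTree

variable {V : Type*} [Fintype V] [DecidableEq V] (T : EFTree V)

lemma mem_children {u v : V} : u ∈ T.children v ↔ u ≠ T.root ∧ T.parent u = v := by
  simp [children]

lemma depth_of_mem_children {u v : V} (h : u ∈ T.children v) : T.depth u = T.depth v + 1 := by
  obtain ⟨hu, rfl⟩ := T.mem_children.1 h
  exact T.depth_parent u hu

lemma depth_parent_le (v : V) : T.depth (T.parent v) ≤ T.depth v := by
  by_cases hv : v = T.root
  · rw [hv, T.parent_root]
  · rw [T.depth_parent v hv]; omega

lemma desc_of_mem_children {u v : V} (h : u ∈ T.children v) : T.Desc u v :=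
  ⟨1, (T.mem_children.1 h).2⟩

section Desc

variable {T}

lemma Desc.trans {x y z : V} (hxy : T.Desc x y) (hyz : T.Desc y z) : T.Desc x z := by
  obtain ⟨k, rfl⟩ := hxy
  obtain ⟨l, rfl⟩ := hyz
  exact ⟨l + k, Function.iterate_add_apply _ _ _ _⟩

lemma Desc.depth_le {x y : V} (h : T.Desc x y) : T.depth y ≤ T.depth x := by
  obtain ⟨k, rfl⟩ := h
  induction k with
  | zero => exact le_rfl
  | succ k ih =>
    rw [Function.iterate_succ_apply']
    exact (T.depth_parent_le _).trans ih

lemma Desc.eq_of_depth_le {x y : V} (h : T.Desc x y) (hd : T.depth x ≤ T.depth y) : x = y := by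
  obtain ⟨_ | k, rfl⟩ := h
  · rfl
  by_cases hx : x = T.root
  · subst hx
    exact (Function.iterate_fixed T.parent_root _).symm
  · have hy : T.depth (T.parent^[k + 1] x) ≤ T.depth (T.parent x) :=
      Desc.depth_le (T := T) ⟨k, (Function.iterate_succ_apply _ _ _).symm⟩
    have := T.depth_parent x hx
    omega

lemma Desc.total {x u v : V} (hu : T.Desc x u) (hv : T.Desc x v) :
    T.Desc u v ∨ T.Desc v u := by
  obtain ⟨k, rfl⟩ := hu
  obtain ⟨l, rfl⟩ := hv
  rcases le_total k l with h | h
  · obtain ⟨j, rfl⟩ := Nat.exists_eq_add_of_le h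
    exact Or.inl ⟨j, by rw [← Function.iterate_add_apply, add_comm]⟩
  · obtain ⟨j, rfl⟩ := Nat.exists_eq_add_of_le h
    exact Or.inr ⟨j, by rw [← Function.iterate_add_apply, add_comm]⟩

lemma Desc.eq_of_depth_eq {x u v : V} (hu : T.Desc x u) (hv : T.Desc x v)
    (hd : T.depth u = T.depth v) : u = v := by
  rcases hu.total hv with h | h
  · exact h.eq_of_depth_le hd.le
  · exact (h.eq_of_depth_le hd.ge).symm

end Desc

lemma not_desc_of_mem_children {u v : V} (h : u ∈ T.children v) : ¬T.Desc v u := fun hvu => by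
  have := hvu.depth_le
  have := T.depth_of_mem_children h
  omega

section Reach

variable {σ : V → V} {w : V}

lemma reachFrom_subset {s : Set V} (hw : w ∈ s) (hN : ∀ v ∈ T.N, v ∈ s → σ v ∈ s)
    (hA : ∀ a ∈ T.A, a ∈ s → ∀ u ∈ T.children a, u ∈ s) : T.reachFrom w σ ⊆ s :=
  Set.sInter_subset_of_mem ⟨hw, hN, hA⟩

lemma mem_reachFrom_self : w ∈ T.reachFrom w σ :=
  Set.mem_sInter.2 fun _ hs => hs.1

lemma apply_mem_reachFrom {v : V} (hv : v ∈ T.N) (h : v ∈ T.reachFrom w σ) :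
    σ v ∈ T.reachFrom w σ :=
  Set.mem_sInter.2 fun s hs => hs.2.1 v hv (Set.mem_sInter.1 h s hs)

lemma mem_reachFrom_of_mem_children {a u : V} (ha : a ∈ T.A) (h : a ∈ T.reachFrom w σ)
    (hu : u ∈ T.children a) : u ∈ T.reachFrom w σ :=
  Set.mem_sInter.2 fun s hs => hs.2.2 a ha (Set.mem_sInter.1 h s hs) u hu

lemma reachFrom_subset_of_mem {x : V} (h : x ∈ T.reachFrom w σ) :
    T.reachFrom x σ ⊆ T.reachFrom w σ :=
  T.reachFrom_subset h (fun _ => T.apply_mem_reachFrom)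
    (fun _ ha har _ hu => T.mem_reachFrom_of_mem_children ha har hu)

lemma reachFrom_of_mem_N {v : V} (hv : v ∈ T.N) :
    T.reachFrom v σ = insert v (T.reachFrom (σ v) σ) := by
  refine subset_antisymm (T.reachFrom_subset (Set.mem_insert v _) ?_ ?_) ?_
  · rintro x hx (rfl | hxs)
    · exact Set.mem_insert_of_mem _ T.mem_reachFrom_self
    · exact Set.mem_insert_of_mem _ (T.apply_mem_reachFrom hx hxs)
  · rintro a ha (rfl | has) u hu
    · exact absurd ha (Finset.disjoint_left.1 T.disj hv)
    · exact Set.mem_insert_of_mem _ (T.mem_reachFrom_of_mem_children ha has hu)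
  · exact Set.insert_subset T.mem_reachFrom_self
      (T.reachFrom_subset_of_mem (T.apply_mem_reachFrom hv T.mem_reachFrom_self))

lemma reachFrom_of_mem_A {a : V} (ha : a ∈ T.A) :
    T.reachFrom a σ = insert a (⋃ u ∈ T.children a, T.reachFrom u σ) := by
  refine subset_antisymm (T.reachFrom_subset (Set.mem_insert a _) ?_ ?_) ?_
  · rintro v hv (rfl | hvs)
    · exact absurd ha (Finset.disjoint_left.1 T.disj hv)
    · obtain ⟨u, hu, hvu⟩ := Set.mem_iUnion₂.1 hvs
      exact Set.mem_insert_of_mem _ (Set.mem_biUnion hu (T.apply_mem_reachFrom hv hvu))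
  · rintro b hb (rfl | hbs) u hu
    · exact Set.mem_insert_of_mem _ (Set.mem_biUnion hu T.mem_reachFrom_self)
    · obtain ⟨u', hu', hbu'⟩ := Set.mem_iUnion₂.1 hbs
      exact Set.mem_insert_of_mem _
        (Set.mem_biUnion hu' (T.mem_reachFrom_of_mem_children hb hbu' hu))
  · refine Set.insert_subset T.mem_reachFrom_self (Set.iUnion₂_subset fun u hu => ?_)
    exact T.reachFrom_subset_of_mem (T.mem_reachFrom_of_mem_children ha T.mem_reachFrom_self hu)

lemma reachFrom_eq_singleton {u : V} (hN : u ∉ T.N) (hA : u ∉ T.A) : T.reachFrom u σ = {u} :=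
  subset_antisymm
    (T.reachFrom_subset rfl (fun _ hv hvu => absurd (hvu ▸ hv) hN)
      (fun _ ha hau => absurd (hau ▸ ha) hA))
    (Set.singleton_subset_iff.2 T.mem_reachFrom_self)

lemma IsRedSubStrat.desc_apply (hσ : T.IsRedSubStrat w σ) {v : V} (hv : v ∈ T.N) :
    T.Desc (σ v) v := by
  by_cases hvr : v ∈ T.reachFrom w σ
  · exact T.desc_of_mem_children (hσ.1 v hv hvr)
  · exact ⟨0, hσ.2 v fun h => hvr h.2⟩

lemma desc_of_mem_reachFrom (hσ : ∀ v ∈ T.N, T.Desc (σ v) v) {x : V}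
    (hx : x ∈ T.reachFrom w σ) : T.Desc x w :=
  T.reachFrom_subset (s := {x | T.Desc x w}) ⟨0, rfl⟩
    (fun v hv hvw => (hσ v hv).trans hvw)
    (fun _ _ haw _ hu => (T.desc_of_mem_children hu).trans haw) hx

lemma AsetFrom_of_mem_N {v : V} (hv : v ∈ T.N) : T.AsetFrom v σ = T.AsetFrom (σ v) σ := by
  ext b
  simp only [AsetFrom, Finset.mem_filter, T.reachFrom_of_mem_N hv, Set.mem_insert_iff]
  constructor
  · rintro ⟨hb, rfl | h⟩
    · exact absurd hb (Finset.disjoint_left.1 T.disj hv)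
    · exact ⟨hb, h⟩
  · exact fun ⟨hb, h⟩ => ⟨hb, Or.inr h⟩

lemma AsetFrom_of_mem_A {a : V} (ha : a ∈ T.A) :
    T.AsetFrom a σ =
      insert a (((T.children a).filter (· ∈ T.N)).biUnion (T.AsetFrom · σ)) := by
  ext b
  simp only [AsetFrom, Finset.mem_filter, T.reachFrom_of_mem_A ha, Set.mem_insert_iff,
    Set.mem_iUnion, Finset.mem_insert, Finset.mem_biUnion, exists_prop]
  constructor
  · rintro ⟨hb, rfl | ⟨u, hu, hbu⟩⟩
    · exact Or.inl rfl
    · by_cases huN : u ∈ T.N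
      · exact Or.inr ⟨u, ⟨hu, huN⟩, hb, hbu⟩
      · -- a child of an action that is not an infoset is a leaf
        obtain ⟨hu_root, hu_parent⟩ := T.mem_children.1 hu
        have huA : u ∉ T.A := T.action_child u hu_root (hu_parent ▸ ha)
        rw [T.reachFrom_eq_singleton huN huA, Set.mem_singleton_iff] at hbu
        exact absurd (hbu ▸ hb) huA
  · rintro (rfl | ⟨u, ⟨hu, _⟩, hb, hbu⟩)
    · exact ⟨ha, Or.inl rfl⟩
    · exact ⟨hb, Or.inr ⟨u, hu, hbu⟩⟩

lemma notMem_AsetFrom_of_mem_children (hσ : ∀ v ∈ T.N, T.Desc (σ v) v) {a u : V}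
    (hu : u ∈ T.children a) : a ∉ T.AsetFrom u σ := fun h =>
  T.not_desc_of_mem_children hu (T.desc_of_mem_reachFrom hσ (Finset.mem_filter.1 h).2)

lemma pairwiseDisjoint_AsetFrom (hσ : ∀ v ∈ T.N, T.Desc (σ v) v) (a : V) :
    (T.children a : Set V).PairwiseDisjoint (T.AsetFrom · σ) := by
  intro u hu u' hu' hne
  refine Finset.disjoint_left.2 fun b hb hb' => hne ?_
  exact (T.desc_of_mem_reachFrom hσ (Finset.mem_filter.1 hb).2).eq_of_depth_eq
    (T.desc_of_mem_reachFrom hσ (Finset.mem_filter.1 hb').2)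
    ((T.depth_of_mem_children hu).trans (T.depth_of_mem_children hu').symm)

lemma card_AsetFrom_lt (hσ : ∀ v ∈ T.N, T.Desc (σ v) v) {a u : V} (ha : a ∈ T.A)
    (hu : u ∈ T.children a) (huN : u ∈ T.N) :
    (T.AsetFrom u σ).card < (T.AsetFrom a σ).card := by
  rw [T.AsetFrom_of_mem_A ha]
  refine Finset.card_lt_card (Finset.ssubset_iff_subset_ne.2 ⟨?_, ?_⟩)
  · exact (Finset.subset_biUnion_of_mem (T.AsetFrom · σ)
      (Finset.mem_filter.2 ⟨hu, huN⟩)).trans (Finset.subset_insert _ _)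
  · exact fun h => T.notMem_AsetFrom_of_mem_children hσ hu (h ▸ Finset.mem_insert_self _ _)

lemma sum_AsetFrom_of_mem_A (hσ : ∀ v ∈ T.N, T.Desc (σ v) v) {M : Type*} [AddCommMonoid M]
    (f : V → M) {a : V} (ha : a ∈ T.A) :
    ∑ b ∈ T.AsetFrom a σ, f b =
      f a + ∑ u ∈ (T.children a).filter (· ∈ T.N), ∑ b ∈ T.AsetFrom u σ, f b := by
  have ha_notMem : a ∉ ((T.children a).filter (· ∈ T.N)).biUnion (T.AsetFrom · σ) := by
    intro h
    obtain ⟨u, hu, hau⟩ := Finset.mem_biUnion.1 h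
    exact T.notMem_AsetFrom_of_mem_children hσ (Finset.mem_filter.1 hu).1 hau
  rw [T.AsetFrom_of_mem_A ha, Finset.sum_insert ha_notMem, Finset.sum_biUnion
    ((T.pairwiseDisjoint_AsetFrom hσ a).subset (Finset.coe_subset.2 (Finset.filter_subset _ _)))]

end Reach

theorem sum_one_div_AsetFrom (m : V → ℕ)
    (hmA : ∀ a ∈ T.A, m a = 1 + ∑ v ∈ (T.children a).filter (· ∈ T.N), m v)
    (β : V → ℝ) (hβA : ∀ a ∈ T.A, β a = (m a : ℝ) * β (T.parent a))
    (hβN : ∀ v ∈ T.N, v ≠ T.root → β v = β (T.parent v) / (m v : ℝ))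
    {σ : V → V} (hσ : T.IsRedStrat σ) {v : V} (hv : v ∈ T.N) (hvr : v ∈ T.reachS σ) :
    ∑ a ∈ T.AsetFrom v σ, (1 : ℝ) / β a = 1 / β v := by
  induction hn : (T.AsetFrom v σ).card using Nat.strong_induction_on generalizing v with
  | _ n ih =>
  have hdesc : ∀ v ∈ T.N, T.Desc (σ v) v := fun _ => IsRedSubStrat.desc_apply T hσ
  set a := σ v
  obtain ⟨ha_root, ha_parent⟩ := T.mem_children.1 (hσ.1 v hv hvr)
  have haA : a ∈ T.A := T.infoset_child a ha_root (ha_parent ▸ hv)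
  have har : a ∈ T.reachS σ := T.apply_mem_reachFrom hv hvr
  have hchild : ∀ u ∈ (T.children a).filter (· ∈ T.N),
      ∑ b ∈ T.AsetFrom u σ, (1 : ℝ) / β b = m u / β a := by
    intro u hu
    obtain ⟨hua, huN⟩ := Finset.mem_filter.1 hu
    obtain ⟨hu_root, hu_parent⟩ := T.mem_children.1 hua
    have hlt : (T.AsetFrom u σ).card < n :=
      hn ▸ T.AsetFrom_of_mem_N hv ▸ T.card_AsetFrom_lt hdesc haA hua huN
    rw [ih _ hlt huN (T.mem_reachFrom_of_mem_children haA har hua) rfl, hβN u huN hu_root,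
      hu_parent, one_div_div]
  have hma : (m a : ℝ) ≠ 0 := by rw [hmA a haA]; positivity
  calc ∑ b ∈ T.AsetFrom v σ, (1 : ℝ) / β b
      = 1 / β a + ∑ u ∈ (T.children a).filter (· ∈ T.N), (m u : ℝ) / β a := by
        rw [T.AsetFrom_of_mem_N hv, T.sum_AsetFrom_of_mem_A hdesc _ haA,
          Finset.sum_congr rfl hchild]
    _ = m a / β a := by
        rw [hmA a haA, ← Finset.sum_div, ← add_div]
        push_cast
        rfl
    _ = 1 / β v := by
        rw [hβA a haA, ha_parent, div_mul_cancel_left₀ hma, one_div]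

end EFTree

theorem stmt4_general {V : Type*} [Fintype V] [DecidableEq V] (T : EFTree V)
    (m : V → ℕ)
    (hmA : ∀ a ∈ T.A, m a = 1 + ∑ v ∈ (T.children a).filter (· ∈ T.N), m v)
    (β : V → ℝ) (hβr : β T.root = 1)
    (hβA : ∀ a ∈ T.A, β a = (m a : ℝ) * β (T.parent a))
    (hβN : ∀ v ∈ T.N, v ≠ T.root → β v = β (T.parent v) / (m v : ℝ))
    (σ : V → V) (hσ : T.IsRedStrat σ) :
    ∑ a ∈ T.Aset σ, (1 : ℝ) / β a = 1 := by
  have h := T.sum_one_div_AsetFrom m hmA β hβA hβN hσ T.root_N T.mem_reachFrom_self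
  rwa [hβr, div_one] at h

theorem stmt4 {V : Type*} [Fintype V] [DecidableEq V] (T : EFTree V)
    (m : V → ℕ)
    (hmA : ∀ a ∈ T.A, m a = 1 + ∑ v ∈ (T.children a).filter (· ∈ T.N), m v)
    (hmN : ∀ v ∈ T.N, m v = ∑ a ∈ T.children v, m a)
    (β : V → ℝ) (hβr : β T.root = 1)
    (hβA : ∀ a ∈ T.A, β a = (m a : ℝ) * β (T.parent a))
    (hβN : ∀ v ∈ T.N, v ≠ T.root → β v = β (T.parent v) / (m v : ℝ))
    (σ : V → V) (hσ : T.IsRedStrat σ) :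
    ∑ a ∈ T.Aset σ, (1 : ℝ) / β a = 1 :=
  stmt4_general T m hmA β hβr hβA hβN σ hσ
end
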